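/- If ζ(𝐛) ≤ 1, then sup_{𝐚∈ℝ^n} ( ∑_{i=1}^n b_i a_i − ‖𝐚‖_tr ) = 0; i.e., the Hamiltonian H(𝐛) for p = 1 vanishes when ζ(𝐛) ≤ 1. -/

import Mathlib

/-!
Split `b = b⁺ - b⁻`. Every coordinate of `a` lies between `m = min(minᵢ aᵢ, 0)` and
`M = max(maxᵢ aᵢ, 0)`, so `⟨a, b⟩ ≤ M ∑ bᵢ⁺ - m ∑ bᵢ⁻`. Both `∑ bᵢ⁺` and `∑ bᵢ⁻` are, up to sign,
sums of `b` over a subset of the indices, hence at most `ζ(b)`; this gives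
`⟨a, b⟩ ≤ ζ(b) ‖a‖_tr ≤ ‖a‖_tr`, with equality at `a = 0`.
-/

noncomputable def tropNorm {n : ℕ} (a : Fin n → ℝ) : ℝ :=
  Finset.fold max 0 a Finset.univ - Finset.fold min 0 a Finset.univ

noncomputable def zeta {n : ℕ} (b : Fin n → ℝ) : ℝ :=
  Finset.univ.powerset.sup' ⟨∅, Finset.empty_mem_powerset _⟩
    (fun S => |∑ i ∈ S, b i|)

lemma mul_le_posPart_mul_sub_negPart_mul {α : Type*} [Ring α] [LinearOrder α]
    [IsOrderedRing α] {x y m M : α} (hm : m ≤ y) (hM : y ≤ M) :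
    x * y ≤ x⁺ * M - x⁻ * m := by
  conv_lhs => rw [← posPart_sub_negPart x]
  rw [sub_mul]
  exact sub_le_sub (mul_le_mul_of_nonneg_left hM (posPart_nonneg x))
    (mul_le_mul_of_nonneg_left hm (negPart_nonneg x))

section Fin

variable {n : ℕ}

lemma abs_sum_le_zeta (b : Fin n → ℝ) (S : Finset (Fin n)) : |∑ i ∈ S, b i| ≤ zeta b :=
  Finset.le_sup' (fun T => |∑ i ∈ T, b i|) (Finset.mem_powerset.2 (Finset.subset_univ S))

lemma sum_posPart_le_zeta (b : Fin n → ℝ) : ∑ i, (b i)⁺ ≤ zeta b := by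
  have h : ∑ i, (b i)⁺ = ∑ i with 0 ≤ b i, b i := by
    simp only [posPart_eq_ite, Finset.sum_filter]
  exact h ▸ (le_abs_self _).trans (abs_sum_le_zeta b _)

lemma sum_negPart_le_zeta (b : Fin n → ℝ) : ∑ i, (b i)⁻ ≤ zeta b := by
  have h : ∑ i, (b i)⁻ = -∑ i with b i ≤ 0, b i := by
    simp only [negPart_eq_ite, Finset.sum_filter, ← Finset.sum_neg_distrib, neg_ite, neg_zero]
  exact h ▸ (neg_le_abs _).trans (abs_sum_le_zeta b _)

lemma le_fold_max_zero (a : Fin n → ℝ) (i : Fin n) : a i ≤ Finset.univ.fold max 0 a :=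
  Finset.le_fold_max _ |>.2 (Or.inr ⟨i, Finset.mem_univ i, le_rfl⟩)

lemma fold_min_zero_le (a : Fin n → ℝ) (i : Fin n) : Finset.univ.fold min 0 a ≤ a i :=
  Finset.fold_min_le _ |>.2 (Or.inr ⟨i, Finset.mem_univ i, le_rfl⟩)

lemma zero_le_fold_max_zero (a : Fin n → ℝ) : 0 ≤ Finset.univ.fold max 0 a :=
  Finset.le_fold_max _ |>.2 (Or.inl le_rfl)

lemma fold_min_zero_nonpos (a : Fin n → ℝ) : Finset.univ.fold min 0 a ≤ 0 :=
  Finset.fold_min_le _ |>.2 (Or.inl le_rfl)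

lemma tropNorm_nonneg (a : Fin n → ℝ) : 0 ≤ tropNorm a :=
  sub_nonneg.2 ((fold_min_zero_nonpos a).trans (zero_le_fold_max_zero a))

lemma tropNorm_zero : tropNorm (0 : Fin n → ℝ) = 0 := by
  simp [tropNorm, Finset.fold_const]

lemma sum_mul_le_zeta_mul_tropNorm (a b : Fin n → ℝ) :
    ∑ i, b i * a i ≤ zeta b * tropNorm a := by
  set M := Finset.univ.fold max 0 a
  set m := Finset.univ.fold min 0 a
  calc ∑ i, b i * a i ≤ ∑ i, ((b i)⁺ * M - (b i)⁻ * m) :=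
        Finset.sum_le_sum fun i _ =>
          mul_le_posPart_mul_sub_negPart_mul (fold_min_zero_le a i) (le_fold_max_zero a i)
    _ = (∑ i, (b i)⁺) * M + (∑ i, (b i)⁻) * -m := by
        rw [Finset.sum_sub_distrib, ← Finset.sum_mul, ← Finset.sum_mul]; ring
    _ ≤ zeta b * M + zeta b * -m := by
        gcongr
        · exact zero_le_fold_max_zero a
        · exact sum_posPart_le_zeta b
        · exact neg_nonneg.2 (fold_min_zero_nonpos a)
        · exact sum_negPart_le_zeta b
    _ = zeta b * tropNorm a := by rw [tropNorm]; ring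

end Fin

theorem hamiltonian_p1_zero {n : ℕ} (b : Fin n → ℝ) (hb : zeta b ≤ 1) :
    sSup { r : ℝ | ∃ a : Fin n → ℝ, r = ∑ i, b i * a i - tropNorm a } = 0 := by
  refine IsGreatest.csSup_eq ⟨⟨0, by simp [tropNorm_zero]⟩, ?_⟩
  rintro _ ⟨a, rfl⟩
  have h := sum_mul_le_zeta_mul_tropNorm a b
  have := mul_le_of_le_one_left (tropNorm_nonneg a) hb
  linarith
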